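/- Let H be a 4-uniform hypergraph on a finite vertex set V with n = |V| ≥ 4 vertices, given by a finite nonempty family (e_i)_{i∈I} of 4-element subsets of V (repeats allowed). If H is 2-colorable, then its average degree d̄ = 4|I|/n satisfies d̄ ≤ −2·λ_min − ((n−1)/3)·λ^(2)_min, where λ_min is the smallest eigenvalue of the underlying graph adjacency matrix of H and λ^(2)_min is the smallest eigenvalue of the 2-subset graph adjacency matrix of H. -/

import Mathlib

open Finset

/-- The underlying graph adjacency matrix of a hypergraph given by the family of hyperedges
`e : I → Finset V`: the entry at `(u, v)` with `u ≠ v` is the number of hyperedges containing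
both `u` and `v`, and the diagonal is zero. -/
def underlyingAdj {V I : Type*} [Fintype I] [DecidableEq V] (e : I → Finset V) :
    Matrix V V ℝ := fun u v =>
  if u = v then 0 else ((Finset.univ.filter fun i => u ∈ e i ∧ v ∈ e i).card : ℝ)

lemma underlyingAdj_isHermitian {V I : Type*} [Fintype I] [DecidableEq V] (e : I → Finset V) :
    (underlyingAdj e).IsHermitian := by
  rw [Matrix.IsHermitian, Matrix.conjTranspose_eq_transpose_of_trivial]
  apply Matrix.IsSymm.ext
  intro i j
  simp only [underlyingAdj, eq_comm (a := j) (b := i)]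
  rcases eq_or_ne i j with h | h
  · simp [h]
  · simp only [if_neg h, if_neg h]
    congr 2
    apply Finset.filter_congr
    intro x _
    simp [and_comm]

/-- The 2-subset graph adjacency matrix of a hypergraph given by the family of hyperedges
`e : I → Finset V`: it is indexed by the 2-element subsets of `V`; the entry at `(S, T)` is the
number of hyperedges containing `S ∪ T` when `S` and `T` are disjoint, and `0` otherwise. -/
def twoSubsetAdj {V I : Type*} [Fintype V] [Fintype I] [DecidableEq V] (e : I → Finset V) :
    Matrix {S : Finset V // S.card = 2} {S : Finset V // S.card = 2} ℝ := fun S T =>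
  if Disjoint S.1 T.1 then ((Finset.univ.filter fun i => S.1 ∪ T.1 ⊆ e i).card : ℝ) else 0

lemma twoSubsetAdj_isHermitian {V I : Type*} [Fintype V] [Fintype I] [DecidableEq V]
    (e : I → Finset V) : (twoSubsetAdj e).IsHermitian := by
  rw [Matrix.IsHermitian, Matrix.conjTranspose_eq_transpose_of_trivial]
  apply Matrix.IsSymm.ext
  intro S T
  simp only [twoSubsetAdj, disjoint_comm, Finset.union_comm]

/-!
Let `x v = ±1` encode a proper 2-colouring and put `y S = ∏ v ∈ S, x v` on pairs. By the Rayleigh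
bound, `λ_min · n ≤ xᵀ A x = ∑ₑ ((∑_{v ∈ e} x v)² - 4)` and
`λ⁽²⁾_min · n(n-1)/2 ≤ yᵀ B y = 6 ∑ₑ ∏_{v ∈ e} x v`, the factor 6 counting the ordered splittings
of a hyperedge into two disjoint pairs. On a non-monochromatic 4-set, `(∑ x)² + 2 ∏ x = 2`
(a 2+2 colouring gives `0 + 2`, a 3+1 colouring `4 - 2`), so the combination
`-2 xᵀ A x - (2/3) yᵀ B y` is exactly `4` per hyperedge, i.e. `4 |I|`.
-/

open Matrix

theorem Matrix.IsHermitian.iInf_eigenvalues_mul_dotProduct_self_le {n : Type*} [Fintype n]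
    [DecidableEq n] {A : Matrix n n ℝ} (hA : A.IsHermitian) (x : n → ℝ) :
    (⨅ i, hA.eigenvalues i) * (x ⬝ᵥ x) ≤ x ⬝ᵥ A *ᵥ x := by
  set c := ⨅ i, hA.eigenvalues i
  set U : Matrix n n ℝ := (hA.eigenvectorUnitary : Matrix n n ℝ)
  have hshift : (diagonal fun i => hA.eigenvalues i - c).PosSemidef :=
    posSemidef_diagonal_iff.2 fun i => sub_nonneg.2 (ciInf_le (Finite.bddBelow_range _) i)
  have hA_sub : A - c • 1 = U * diagonal (fun i => hA.eigenvalues i - c) * Uᴴ := by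
    conv_lhs => rw [hA.spectral_theorem]
    rw [Unitary.conjStarAlgAut_apply, ← diagonal_sub, ← smul_one_eq_diagonal, mul_sub, sub_mul,
      mul_smul_comm, mul_one, smul_mul_assoc, ← star_eq_conjTranspose]
    simp [U]
  have hpos := (hshift.mul_mul_conjTranspose_same U).dotProduct_mulVec_nonneg x
  rw [← hA_sub, sub_mulVec, smul_mulVec, one_mulVec, dotProduct_sub, dotProduct_smul] at hpos
  simpa [sub_nonneg] using hpos

theorem dotProduct_self_eq_card_of_sq_eq_one {n : Type*} [Fintype n] {x : n → ℝ}
    (hx : ∀ i, x i ^ 2 = 1) : x ⬝ᵥ x = Fintype.card n := by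
  simp [dotProduct, ← sq, hx]

theorem dotProduct_mulVec_of_card_filter {ι n : Type*} [Fintype ι] [Fintype n]
    (p : ι → n → n → Prop) [∀ i u v, Decidable (p i u v)] (x : n → ℝ) :
    x ⬝ᵥ (of fun u v => (#{i | p i u v} : ℝ)) *ᵥ x =
      ∑ i, ∑ u, ∑ v, if p i u v then x u * x v else 0 := by
  simp only [dotProduct, mulVec, of_apply, natCast_card_filter, sum_mul, mul_sum, ite_mul,
    one_mul, zero_mul, mul_ite, mul_zero]
  exact (sum_congr rfl fun _ _ => sum_comm).trans sum_comm

theorem sum_sum_ite_mem_erase_mul {V : Type*} [Fintype V] [DecidableEq V] (s : Finset V)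
    (x : V → ℝ) :
    ∑ u, ∑ v, (if u ∈ s ∧ v ∈ s.erase u then x u * x v else 0) =
      (∑ v ∈ s, x v) ^ 2 - ∑ v ∈ s, x v ^ 2 := by
  simp only [ite_and, sum_ite_mem_eq, sum_ite_irrel, sum_const_zero]
  rw [sq, sum_mul_sum, eq_sub_iff_add_eq, ← sum_add_distrib]
  refine sum_congr rfl fun u hu => ?_
  rw [sq, add_comm, ← add_sum_erase s (x u * x ·) hu]

theorem underlyingAdj_eq_of_card_filter {V I : Type*} [Fintype I] [DecidableEq V]
    (e : I → Finset V) :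
    underlyingAdj e = of fun u v => (#{i | u ∈ e i ∧ v ∈ (e i).erase u} : ℝ) := by
  ext u v
  rcases eq_or_ne u v with rfl | huv
  · simp [underlyingAdj]
  · simp [underlyingAdj, huv, huv.symm]

theorem dotProduct_underlyingAdj_mulVec {V I : Type*} [Fintype V] [Fintype I] [DecidableEq V]
    (e : I → Finset V) (x : V → ℝ) :
    x ⬝ᵥ underlyingAdj e *ᵥ x = ∑ i, ((∑ v ∈ e i, x v) ^ 2 - ∑ v ∈ e i, x v ^ 2) := by
  rw [underlyingAdj_eq_of_card_filter, dotProduct_mulVec_of_card_filter]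
  exact sum_congr rfl fun i _ => sum_sum_ite_mem_erase_mul (e i) x

theorem Finset.disjoint_and_union_subset_iff {α : Type*} [DecidableEq α] {s t u : Finset α}
    (h : #t + #u = #s) : Disjoint t u ∧ t ∪ u ⊆ s ↔ t ⊆ s ∧ u = s \ t := by
  constructor
  · rintro ⟨htu, hsub⟩
    have hs : t ∪ u = s := eq_of_subset_of_card_le hsub (by rw [card_union_of_disjoint htu, h])
    exact ⟨hs ▸ subset_union_left, by rw [← hs, union_sdiff_cancel_left htu]⟩
  · rintro ⟨hts, rfl⟩
    exact ⟨disjoint_sdiff, (union_sdiff_of_subset hts).subset⟩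

theorem card_filter_val_subset {V : Type*} [Fintype V] [DecidableEq V] (k : ℕ) (s : Finset V) :
    #{S : {S : Finset V // #S = k} | S.1 ⊆ s} = (#s).choose k := by
  rw [← card_powersetCard, ← card_map (Function.Embedding.subtype _)]
  congr 1
  ext S
  simp [mem_powersetCard, and_comm]

def pairProd {V : Type*} (x : V → ℝ) (S : {S : Finset V // #S = 2}) : ℝ := ∏ v ∈ S.1, x v

theorem pairProd_sq {V : Type*} {x : V → ℝ} (hx : ∀ v, x v ^ 2 = 1)
    (S : {S : Finset V // #S = 2}) : pairProd x S ^ 2 = 1 := by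
  simp [pairProd, ← prod_pow, hx]

theorem sum_sum_ite_disjoint_union_subset_pairProd {V : Type*} [Fintype V] [DecidableEq V]
    {s : Finset V} (hs : #s = 4) (x : V → ℝ) :
    ∑ S, ∑ T, (if Disjoint S.1 T.1 ∧ S.1 ∪ T.1 ⊆ s then pairProd x S * pairProd x T else 0) =
      6 * ∏ v ∈ s, x v := by
  have inner : ∀ S : {S : Finset V // #S = 2}, (∑ T,
      if Disjoint S.1 T.1 ∧ S.1 ∪ T.1 ⊆ s then pairProd x S * pairProd x T else 0) =
      if S.1 ⊆ s then ∏ v ∈ s, x v else 0 := by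
    intro S
    have hcard (T : {S : Finset V // #S = 2}) : #S.1 + #T.1 = #s := by rw [S.2, T.2, hs]
    simp only [disjoint_and_union_subset_iff (hcard _)]
    split_ifs with hSs
    · have hc : #(s \ S.1) = 2 := by rw [card_sdiff_of_subset hSs, hs, S.2]
      simp only [hSs, true_and]
      rw [Fintype.sum_eq_single ⟨s \ S.1, hc⟩ fun T hT => if_neg fun h => hT (Subtype.ext h),
        if_pos rfl, pairProd, pairProd, mul_comm, prod_sdiff hSs]
    · simp [hSs]
  rw [sum_congr rfl fun S _ => inner S, ← sum_filter, sum_const, nsmul_eq_mul,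
    card_filter_val_subset, hs]
  norm_num [Nat.choose]

theorem twoSubsetAdj_eq_of_card_filter {V I : Type*} [Fintype V] [Fintype I] [DecidableEq V]
    (e : I → Finset V) :
    twoSubsetAdj e = of fun S T => (#{i | Disjoint S.1 T.1 ∧ S.1 ∪ T.1 ⊆ e i} : ℝ) := by
  ext S T
  by_cases h : Disjoint S.1 T.1 <;> simp [twoSubsetAdj, h]

theorem pairProd_dotProduct_twoSubsetAdj_mulVec {V I : Type*} [Fintype V] [Fintype I]
    [DecidableEq V] {e : I → Finset V} (he : ∀ i, #(e i) = 4) (x : V → ℝ) :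
    pairProd x ⬝ᵥ twoSubsetAdj e *ᵥ pairProd x = ∑ i, 6 * ∏ v ∈ e i, x v := by
  rw [twoSubsetAdj_eq_of_card_filter, dotProduct_mulVec_of_card_filter]
  exact sum_congr rfl fun i _ => sum_sum_ite_disjoint_union_subset_pairProd (he i) x

def boolSign {V : Type*} (g : V → Bool) (v : V) : ℝ := if g v then 1 else -1

theorem boolSign_sq {V : Type*} (g : V → Bool) (v : V) : boolSign g v ^ 2 = 1 := by
  unfold boolSign; split_ifs <;> norm_num

theorem sq_sum_boolSign_add_two_mul_prod {V : Type*} {s : Finset V} (hs : #s = 4)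
    {g : V → Bool} (hg : ∃ u ∈ s, ∃ v ∈ s, g u ≠ g v) :
    (∑ v ∈ s, boolSign g v) ^ 2 + 2 * ∏ v ∈ s, boolSign g v = 2 := by
  set a := #{v ∈ s | g v}
  set b := #{v ∈ s | ¬ g v}
  have hab : a + b = 4 := by rw [card_filter_add_card_filter_not, hs]
  have hsum : ∑ v ∈ s, boolSign g v = a - b := by
    simp [boolSign, sum_ite, a, b, sub_eq_add_neg]
  have hprod : ∏ v ∈ s, boolSign g v = (-1) ^ b := by
    simp [boolSign, prod_ite, b]
  obtain ⟨u, hu, v, hv, huv⟩ := hg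
  have ha : a ≠ 0 := by
    rw [Ne, card_eq_zero, filter_eq_empty_iff]
    intro h; have := h hu; have := h hv; simp_all
  have hb : b ≠ 0 := by
    rw [Ne, card_eq_zero, filter_eq_empty_iff]
    intro h; have := h hu; have := h hv; simp_all
  rw [hsum, hprod]
  clear_value a b
  obtain ⟨rfl, rfl⟩ | ⟨rfl, rfl⟩ | ⟨rfl, rfl⟩ :
    (a = 1 ∧ b = 3) ∨ (a = 2 ∧ b = 2) ∨ (a = 3 ∧ b = 1) := by omega
  all_goals norm_num

theorem fourUniform_two_colorable_general {V I : Type*} [Fintype V] [DecidableEq V]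
    [Fintype I] (hn : 4 ≤ Fintype.card V)
    (e : I → Finset V) (he : ∀ i, (e i).card = 4)
    (hcol : ∃ g : V → Bool, ∀ i, ∃ u ∈ e i, ∃ v ∈ e i, g u ≠ g v) :
    (4 * Fintype.card I : ℝ) / (Fintype.card V : ℝ) ≤
      -2 * (⨅ v, (underlyingAdj_isHermitian e).eigenvalues v) -
        ((Fintype.card V : ℝ) - 1) / 3 * ⨅ S, (twoSubsetAdj_isHermitian e).eigenvalues S := by
  obtain ⟨g, hg⟩ := hcol
  set x := boolSign g
  have hA := (underlyingAdj_isHermitian e).iInf_eigenvalues_mul_dotProduct_self_le x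
  rw [dotProduct_self_eq_card_of_sq_eq_one (boolSign_sq g), dotProduct_underlyingAdj_mulVec] at hA
  have hB := (twoSubsetAdj_isHermitian e).iInf_eigenvalues_mul_dotProduct_self_le (pairProd x)
  rw [dotProduct_self_eq_card_of_sq_eq_one (pairProd_sq (boolSign_sq g)), Fintype.card_finset_len,
    Nat.cast_choose_two, pairProd_dotProduct_twoSubsetAdj_mulVec he] at hB
  have hsq (i : I) : ∑ v ∈ e i, x v ^ 2 = 4 := by simp [x, boolSign_sq, he]
  have hedges :
      ∑ i, ((∑ v ∈ e i, x v) ^ 2 + 2 * ∏ v ∈ e i, x v) = 2 * (Fintype.card I : ℝ) := by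
    rw [sum_congr rfl fun i _ => sq_sum_boolSign_add_two_mul_prod (he i) (hg i)]
    simp [mul_comm]
  simp only [hsq, sum_sub_distrib, sum_add_distrib, ← mul_sum, sum_const, card_univ,
    nsmul_eq_mul] at hA hB hedges
  rw [div_le_iff₀ (by norm_cast; omega)]
  linarith

/-- If a 4-uniform hypergraph `H` on a finite vertex set with `n = |V| ≥ 4` vertices, given by a
nonempty family `(e i)_{i : I}` of 4-element subsets, is 2-colorable, then its average degree
`d̄ = 4|I|/n` satisfies `d̄ ≤ -2·λ_min - ((n-1)/3)·λ⁽²⁾_min`, where `λ_min` and `λ⁽²⁾_min` are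
the smallest eigenvalues of the underlying graph and the 2-subset graph adjacency matrices. -/
theorem fourUniform_two_colorable {V I : Type*} [Fintype V] [DecidableEq V]
    [Fintype I] [Nonempty I] (hn : 4 ≤ Fintype.card V)
    (e : I → Finset V) (he : ∀ i, (e i).card = 4)
    (hcol : ∃ g : V → Bool, ∀ i, ∃ u ∈ e i, ∃ v ∈ e i, g u ≠ g v) :
    (4 * Fintype.card I : ℝ) / (Fintype.card V : ℝ) ≤
      -2 * (⨅ v, (underlyingAdj_isHermitian e).eigenvalues v) -
        ((Fintype.card V : ℝ) - 1) / 3 * ⨅ S, (twoSubsetAdj_isHermitian e).eigenvalues S :=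
  fourUniform_two_colorable_general hn e he hcol
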